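/- arXiv:quant-ph/0611284 — 10 statements merged into one kernel-verified Lean document; each statement's English description precedes it below -/
import Mathlib

section
/- If (f, ≼) is a flow on a geometry (G, I, O), then the directed graph P on V(G) with arc set {x → f(x) : x ∈ O^c} is a vertex-disjoint union of directed paths; i.e., every vertex of P has in-degree at most 1 and out-degree at most 1, and P contains no directed cycle. -/
namespace OneWayFlow

variable {V : Type}

/-- A flow `(f, ≼)` on a geometry `(G, I, O)`: `f` maps `Oᶜ` into `Iᶜ` (encoded as a total
function whose values only matter on `Oᶜ`), `le` is a partial order on `V(G)`, and the flow
conditions (i)-(iii) hold. -/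
structure Flow (G : SimpleGraph V) (I O : Set V) where
  f : V → V
  le : V → V → Prop
  le_refl : ∀ x, le x x
  le_trans : ∀ x y z, le x y → le y z → le x z
  le_antisymm : ∀ x y, le x y → le y x → x = y
  f_notMem : ∀ x, x ∉ O → f x ∉ I
  adj : ∀ x, x ∉ O → G.Adj x (f x)
  le_f : ∀ x, x ∉ O → le x (f x)
  le_nbr : ∀ x, x ∉ O → ∀ y, G.Adj y (f x) → le x y

/-- A path cover of a geometry `(G, I, O)`, encoded by its successor function: the arcs of the
cover are exactly `x → succ x` for `x ∉ O`.  Every vertex lies on exactly one maximal directed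
path of the resulting functional digraph; `succ_notMem` says vertices of `I` have in-degree `0`
(paths meet `I` only at their initial point), totality of `succ` on `Oᶜ` together with
`acyclic` says paths meet `O` exactly at their final point. -/
structure PathCover (G : SimpleGraph V) (I O : Set V) where
  succ : V → V
  adj : ∀ x, x ∉ O → G.Adj x (succ x)
  inj : ∀ x, x ∉ O → ∀ y, y ∉ O → succ x = succ y → x = y
  succ_notMem : ∀ x, x ∉ O → succ x ∉ I
  acyclic : ∀ x, ¬ Relation.TransGen (fun a b => a ∉ O ∧ b = succ a) x x

/-- `x → y` is an arc of (some path of) the path cover `C`. -/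
def PathCover.Arc {G : SimpleGraph V} {I O : Set V} (C : PathCover G I O) (x y : V) : Prop :=
  x ∉ O ∧ y = C.succ x

/-- A single segment of an influencing walk for `C`: either an arc `x → f(x)` of `C`, or
`x → f(x) → y` where the edge `y·f(x)` of `G` is not covered by `C`. -/
def PathCover.Seg {G : SimpleGraph V} {I O : Set V} (C : PathCover G I O) (x y : V) : Prop :=
  C.Arc x y ∨ ∃ w, C.Arc x w ∧ G.Adj y w ∧ ¬ C.Arc y w ∧ ¬ C.Arc w y

/-- There is an influencing walk for `C` from `x` to `y` (a concatenation of zero or more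
segments). -/
def PathCover.InflWalk {G : SimpleGraph V} {I O : Set V} (C : PathCover G I O) :
    V → V → Prop :=
  Relation.ReflTransGen C.Seg

/-- `C` has a vicious circuit: a closed influencing walk with at least one segment. -/
def PathCover.Vicious {G : SimpleGraph V} {I O : Set V} (C : PathCover G I O) : Prop :=
  ∃ x, Relation.TransGen C.Seg x x

/-- The natural pre-order for the successor function of `C`: the reflexive-transitive closure
of the relations `x ≼ f(x)` (for `x ∉ O`) and `x ≼ y` whenever `y ~ f(x)`. -/
def PathCover.NatPre {G : SimpleGraph V} {I O : Set V} (C : PathCover G I O) :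
    V → V → Prop :=
  Relation.ReflTransGen (fun x y => x ∉ O ∧ (y = C.succ x ∨ G.Adj y (C.succ x)))

/-- If `(f, ≼)` is a flow on `(G, I, O)`, the digraph `P` on `V(G)` with
arcs `{x → f(x) : x ∈ Oᶜ}` is a vertex-disjoint union of directed paths: every vertex has
in-degree at most 1 and out-degree at most 1, and there is no directed cycle. -/
theorem flow_digraph_disjoint_paths [Fintype V] (G : SimpleGraph V) (I O : Set V)
    (F : Flow G I O) :
    (∀ x x' y, (x ∉ O ∧ y = F.f x) → (x' ∉ O ∧ y = F.f x') → x = x') ∧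
    (∀ x y y', (x ∉ O ∧ y = F.f x) → (x ∉ O ∧ y' = F.f x) → y = y') ∧
    (¬ ∃ x, Relation.TransGen (fun a b => a ∉ O ∧ b = F.f a) x x) := by
  refine ⟨?_, ?_, ?_⟩
  · rintro x x' y ⟨hx, rfl⟩ ⟨hx', hy⟩
    exact F.le_antisymm x x' (F.le_nbr x hx x' (hy ▸ F.adj x' hx'))
      (F.le_nbr x' hx' x (hy ▸ F.adj x hx))
  · rintro x y y' ⟨hx, rfl⟩ ⟨_, rfl⟩
    rfl
  · rintro ⟨x, hx⟩
    have hle : ∀ a b, Relation.ReflTransGen (fun a b => a ∉ O ∧ b = F.f a) a b → F.le a b := by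
      intro a b h
      induction h with
      | refl => exact F.le_refl a
      | tail _ h ih => exact F.le_trans _ _ _ ih (h.2 ▸ F.le_f _ h.1)
    rcases Relation.TransGen.head'_iff.mp hx with ⟨c, ⟨hxO, hc⟩, htail⟩
    have h1 : F.le (F.f x) x := hc ▸ hle _ _ htail
    have h2 := F.le_f x hxO
    exact (F.adj x hxO).ne (F.le_antisymm _ _ h2 h1)

end OneWayFlow
end

section
/- If (f, ≼) is a flow on a geometry (G, I, O), then there exists a path cover 𝒫 of (G, I, O) such that x → y is an arc of some path in 𝒫 if and only if y = f(x). -/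
namespace OneWayFlow

variable {V : Type}

/-- If `(f, ≼)` is a flow on a geometry `(G, I, O)`, then there exists a
path cover `𝒫` of `(G, I, O)` such that `x → y` is an arc of some path of `𝒫` if and only
if `y = f(x)` (with `x ∈ Oᶜ`). -/
theorem flow_gives_path_cover [Fintype V] (G : SimpleGraph V) (I O : Set V)
    (F : Flow G I O) :
    ∃ P : PathCover G I O, ∀ x y, P.Arc x y ↔ (x ∉ O ∧ y = F.f x) := by
  refine ⟨⟨F.f, F.adj, ?_, F.f_notMem, ?_⟩, fun x y => Iff.rfl⟩
  · intro x hx y hy h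
    exact F.le_antisymm x y
      (F.le_nbr x hx y (h ▸ (F.adj y hy)))
      (F.le_nbr y hy x (h ▸ (F.adj x hx)))
  · intro x hcyc
    have key : ∀ a b, Relation.TransGen (fun a b => a ∉ O ∧ b = F.f a) a b →
        F.le a b ∧ a ≠ b := by
      intro a b h
      induction h with
      | single h =>
        exact ⟨h.2 ▸ F.le_f a h.1, h.2 ▸ (G.ne_of_adj (F.adj a h.1))⟩
      | tail h2 h3 ih =>
        rename_i b c
        have hle : F.le b c := h3.2 ▸ F.le_f b h3.1
        have hne : b ≠ c := h3.2 ▸ (G.ne_of_adj (F.adj b h3.1))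
        refine ⟨F.le_trans a b c ih.1 hle, fun hac => ?_⟩
        exact hne (F.le_antisymm b c hle (hac ▸ ih.1))
    exact (key x x hcyc).2 rfl

end OneWayFlow
end

section
/- Let 𝒞 be a path cover of a geometry (G, I, O) with successor function f and natural pre-order ≼. Then ≼ is antisymmetric (hence a partial order) if and only if 𝒞 has no vicious circuit. -/
namespace OneWayFlow

variable {V : Type}

/-!
A generating step `x ≼ y` with `y ~ f(x)` is an influencing walk: if the edge `y·f(x)` is an arc
of `𝒞`, then either `f(y) = f(x)`, so `y = x` by injectivity of `f`, or `y = f(f(x))`, two arcs;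
otherwise it is a single segment. Hence `≼` is the reflexive-transitive closure of the segment
relation, which is irreflexive because the paths of `𝒞` are acyclic, and the reflexive-transitive
closure of an irreflexive relation is antisymmetric exactly when the relation has no cycle.
-/

theorem _root_.Relation.reflTransGen_antisymm_iff {α : Type*} {r : α → α → Prop}
    (hr : ∀ x, ¬ r x x) :
    (∀ x y, Relation.ReflTransGen r x y → Relation.ReflTransGen r y x → x = y) ↔
      ∀ x, ¬ Relation.TransGen r x x := by
  constructor
  · intro hanti x hx
    obtain ⟨b, hxb, hbx⟩ := Relation.TransGen.tail'_iff.mp hx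
    obtain rfl : x = b := hanti x b hxb (Relation.ReflTransGen.single hbx)
    exact hr x hbx
  · intro hacyc x y hxy hyx
    by_contra hne
    have hxy' : Relation.TransGen r x y :=
      (Relation.reflTransGen_iff_eq_or_transGen.mp hxy).resolve_left (Ne.symm hne)
    exact hacyc x (hxy'.trans_left hyx)

namespace PathCover

variable {G : SimpleGraph V} {I O : Set V} (C : PathCover G I O)

theorem seg_irrefl (x : V) : ¬ C.Seg x x := by
  rintro (⟨hxO, hx⟩ | ⟨w, hxw, -, hwx, -⟩)
  · exact C.acyclic x (Relation.TransGen.single ⟨hxO, hx⟩)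
  · exact hwx hxw

theorem natPre_of_seg {x y : V} (h : C.Seg x y) : C.NatPre x y := by
  rcases h with ⟨hxO, hy⟩ | ⟨w, ⟨hxO, rfl⟩, hadj, -, -⟩
  · exact Relation.ReflTransGen.single ⟨hxO, Or.inl hy⟩
  · exact Relation.ReflTransGen.single ⟨hxO, Or.inr hadj⟩

theorem inflWalk_of_adj_succ {x y : V} (hxO : x ∉ O) (hy : G.Adj y (C.succ x)) :
    C.InflWalk x y := by
  by_cases hyx : C.Arc y (C.succ x)
  · obtain rfl : x = y := C.inj x hxO y hyx.1 hyx.2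
    exact Relation.ReflTransGen.refl
  by_cases hxy : C.Arc (C.succ x) y
  · exact .tail (.single (Or.inl ⟨hxO, rfl⟩)) (Or.inl hxy)
  · exact .single (Or.inr ⟨C.succ x, ⟨hxO, rfl⟩, hy, hyx, hxy⟩)

theorem natPre_iff_inflWalk {x y : V} : C.NatPre x y ↔ C.InflWalk x y := by
  constructor
  · intro h
    induction h with
    | refl => exact Relation.ReflTransGen.refl
    | tail _ hstep ih =>
      obtain ⟨hO, rfl | hadj⟩ := hstep
      · exact ih.tail (Or.inl ⟨hO, rfl⟩)
      · exact ih.trans (C.inflWalk_of_adj_succ hO hadj)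
  · intro h
    induction h with
    | refl => exact Relation.ReflTransGen.refl
    | tail _ hseg ih => exact ih.trans (C.natPre_of_seg hseg)

end PathCover

theorem natPre_antisymm_iff_no_vicious_general (G : SimpleGraph V) (I O : Set V)
    (C : PathCover G I O) :
    (∀ x y, C.NatPre x y → C.NatPre y x → x = y) ↔ ¬ C.Vicious := by
  simp only [C.natPre_iff_inflWalk, PathCover.InflWalk, PathCover.Vicious, not_exists]
  exact Relation.reflTransGen_antisymm_iff C.seg_irrefl

/-- Let `𝒞` be a path cover of `(G, I, O)` with natural pre-order `≼`.
Then `≼` is antisymmetric (hence a partial order) iff `𝒞` has no vicious circuit. -/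
theorem natPre_antisymm_iff_no_vicious [Fintype V] (G : SimpleGraph V) (I O : Set V)
    (C : PathCover G I O) :
    (∀ x y, C.NatPre x y → C.NatPre y x → x = y) ↔ ¬ C.Vicious :=
  natPre_antisymm_iff_no_vicious_general G I O C

end OneWayFlow
end

section
/- Let 𝒞 be a path cover of a geometry (G, I, O) with successor function f, and let ≼ be the natural pre-order for f. Then (f, ≼) is a flow on (G, I, O) if and only if 𝒞 has no vicious circuit. Consequently, a geometry has a flow if and only if it has a causal path cover. -/
namespace OneWayFlow

variable {V : Type}

/-- Each segment of an influencing walk gives a strict step in the flow order. -/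
lemma seg_le {G : SimpleGraph V} {I O : Set V} (C : PathCover G I O) (F : Flow G I O)
    (hf : ∀ x, x ∉ O → F.f x = C.succ x) {x y : V} (h : C.Seg x y) :
    F.le x y ∧ x ≠ y := by
  rcases h with ⟨hxO, rfl⟩ | ⟨w, ⟨hxO, rfl⟩, hadj, hnyw, hnwy⟩
  · refine ⟨?_, (C.adj x hxO).ne⟩
    have := F.le_f x hxO
    rwa [hf x hxO] at this
  · refine ⟨F.le_nbr x hxO y (by rwa [hf x hxO]), ?_⟩
    rintro rfl
    exact hnyw ⟨hxO, rfl⟩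

/-- A walk gives `le`. -/
lemma walk_le {G : SimpleGraph V} {I O : Set V} (C : PathCover G I O) (F : Flow G I O)
    (hf : ∀ x, x ∉ O → F.f x = C.succ x) {x y : V}
    (h : Relation.ReflTransGen C.Seg x y) : F.le x y := by
  induction h with
  | refl => exact F.le_refl x
  | tail h1 h2 ih => exact F.le_trans _ _ _ ih (seg_le C F hf h2).1

/-- If a flow agrees with the successor function of a path cover, the cover has no vicious
circuit. -/
lemma not_vicious_of_flow {G : SimpleGraph V} {I O : Set V} (C : PathCover G I O)
    (F : Flow G I O) (hf : ∀ x, x ∉ O → F.f x = C.succ x) : ¬ C.Vicious := by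
  rintro ⟨x, hx⟩
  obtain ⟨b, hxb, hbx⟩ := Relation.TransGen.tail'_iff.mp hx
  obtain ⟨hle, hne⟩ := seg_le C F hf hbx
  exact hne (F.le_antisymm b x hle (walk_le C F hf hxb))

/-- A single generating step of the natural pre-order is realized by influencing walks. -/
lemma transGen_seg_of_step {G : SimpleGraph V} {I O : Set V} (C : PathCover G I O) {x y : V}
    (hx : x ∉ O) (h : y = C.succ x ∨ G.Adj y (C.succ x)) :
    x = y ∨ Relation.TransGen C.Seg x y := by
  rcases h with rfl | hadj
  · exact Or.inr (Relation.TransGen.single (Or.inl ⟨hx, rfl⟩))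
  by_cases h1 : C.Arc y (C.succ x)
  · exact Or.inl (C.inj x hx y h1.1 h1.2)
  by_cases h2 : C.Arc (C.succ x) y
  · exact Or.inr ((Relation.TransGen.single
      (show C.Seg x (C.succ x) from Or.inl ⟨hx, rfl⟩)).tail (Or.inl h2))
  · exact Or.inr (Relation.TransGen.single (Or.inr ⟨C.succ x, ⟨hx, rfl⟩, hadj, h1, h2⟩))

/-- The natural pre-order is contained in the influencing-walk relation. -/
lemma walk_of_natPre {G : SimpleGraph V} {I O : Set V} (C : PathCover G I O) {x y : V}
    (h : C.NatPre x y) : Relation.ReflTransGen C.Seg x y := by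
  induction h with
  | refl => exact Relation.ReflTransGen.refl
  | tail h1 h2 ih =>
      rcases transGen_seg_of_step C h2.1 h2.2 with rfl | h3
      · exact ih
      · exact ih.trans h3.to_reflTransGen

/-- If `C` has no vicious circuit, `(succ, NatPre)` is a flow. -/
lemma flow_of_not_vicious {G : SimpleGraph V} {I O : Set V} (C : PathCover G I O)
    (hv : ¬ C.Vicious) :
    ∃ F : Flow G I O, (∀ x, x ∉ O → F.f x = C.succ x) ∧ ∀ x y, F.le x y ↔ C.NatPre x y := by
  refine ⟨⟨C.succ, C.NatPre, fun x => Relation.ReflTransGen.refl,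
    fun x y z h1 h2 => h1.trans h2, ?_, C.succ_notMem, C.adj,
    fun x hx => Relation.ReflTransGen.single ⟨hx, Or.inl rfl⟩,
    fun x hx y hadj => Relation.ReflTransGen.single ⟨hx, Or.inr hadj⟩⟩,
    fun _ _ => rfl, fun _ _ => Iff.rfl⟩
  intro x y h1 h2
  by_contra hne
  rcases Relation.reflTransGen_iff_eq_or_transGen.mp (walk_of_natPre C h1) with h | h
  · exact hne h.symm
  · exact hv ⟨x, h.trans_left (walk_of_natPre C h2)⟩

/-- Let `𝒞` be a path cover of `(G, I, O)` with successor function `f` and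
natural pre-order `≼`.  Then `(f, ≼)` is a flow on `(G, I, O)` iff `𝒞` has no vicious
circuit.  Consequently, a geometry has a flow iff it has a causal path cover. -/
theorem flow_iff_causal_path_cover [Fintype V] (G : SimpleGraph V) (I O : Set V)
    (C : PathCover G I O) :
    ((∃ F : Flow G I O, (∀ x, x ∉ O → F.f x = C.succ x) ∧
        ∀ x y, F.le x y ↔ C.NatPre x y) ↔ ¬ C.Vicious) ∧
    (Nonempty (Flow G I O) ↔ ∃ C' : PathCover G I O, ¬ C'.Vicious) := by
  constructor
  · constructor
    · rintro ⟨F, hf, -⟩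
      exact not_vicious_of_flow C F hf
    · exact flow_of_not_vicious C
  · constructor
    · rintro ⟨F⟩
      have hinj : ∀ x, x ∉ O → ∀ y, y ∉ O → F.f x = F.f y → x = y := by
        intro x hx y hy hfe
        refine F.le_antisymm x y (F.le_nbr x hx y ?_) (F.le_nbr y hy x ?_)
        · rw [hfe]; exact F.adj y hy
        · rw [← hfe]; exact F.adj x hx
      have hac : ∀ x, ¬ Relation.TransGen (fun a b => a ∉ O ∧ b = F.f a) x x := by
        intro x hx
        obtain ⟨b, hxb, hbO, rfl⟩ := Relation.TransGen.tail'_iff.mp hx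
        have hstep : ∀ a c, Relation.ReflTransGen (fun a b => a ∉ O ∧ b = F.f a) a c →
            F.le a c := by
          intro a c h
          induction h with
          | refl => exact F.le_refl _
          | tail h1 h2 ih => exact F.le_trans _ _ _ ih (h2.2 ▸ F.le_f _ h2.1)
        exact (F.adj b hbO).ne (F.le_antisymm _ _ (F.le_f b hbO) (hstep _ _ hxb))
      let C' : PathCover G I O := ⟨F.f, F.adj, hinj, F.f_notMem, hac⟩
      exact ⟨C', not_vicious_of_flow C' F (fun _ _ => rfl)⟩
    · rintro ⟨C', hv⟩
      obtain ⟨F, -, -⟩ := flow_of_not_vicious C' hv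
      exact ⟨F⟩

end OneWayFlow
end

section
/- Let 𝒞 be a path cover of a geometry (G, I, O) with successor function f, and suppose the natural pre-order ≼ for f is a partial order. Then ≼ is the coarsest partial order making (f, ≼) a flow: for any partial order ≼′ on V(G) such that (f, ≼′) is a flow, x ≼ y implies x ≼′ y for all x, y ∈ V(G). -/
namespace OneWayFlow

variable {V : Type}

/-- Let `𝒞` be a path cover of `(G, I, O)` with successor function `f`,
and suppose the natural pre-order `≼` for `f` is a partial order (i.e. antisymmetric).
Then `≼` is the coarsest partial order making `(f, ≼)` a flow: for any partial order `≼′`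
on `V(G)` such that `(f, ≼′)` is a flow, `x ≼ y` implies `x ≼′ y`. -/
theorem natPre_coarsest [Fintype V] (G : SimpleGraph V) (I O : Set V)
    (C : PathCover G I O)
    (hanti : ∀ x y, C.NatPre x y → C.NatPre y x → x = y)
    (le' : V → V → Prop)
    (le'_refl : ∀ x, le' x x)
    (le'_trans : ∀ x y z, le' x y → le' y z → le' x z)
    (le'_antisymm : ∀ x y, le' x y → le' y x → x = y)
    (h_f : ∀ x, x ∉ O → le' x (C.succ x))
    (h_nbr : ∀ x, x ∉ O → ∀ y, G.Adj y (C.succ x) → le' x y) :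
    ∀ x y, C.NatPre x y → le' x y := by
  intro x y h
  induction h with
  | refl => exact le'_refl x
  | tail _ hstep ih =>
    obtain ⟨hO, hcase | hadj⟩ := hstep
    · exact le'_trans _ _ _ ih (hcase ▸ h_f _ hO)
    · exact le'_trans _ _ _ ih (h_nbr _ hO _ hadj)

end OneWayFlow
end

section
/- Let (G, I, O) be a geometry with |I| = |O| that has a causal path cover 𝒞. Then 𝒞 is the unique maximum-size collection of vertex-disjoint directed I–O paths in G: any collection ℱ of vertex-disjoint I–O paths with |ℱ| = |I| equals 𝒞. -/
namespace OneWayFlow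

variable {V : Type}

/-- A collection of vertex-disjoint directed `I`–`O` paths in `G`, encoded by the set `S` of
covered vertices together with the set of arcs `A`: in- and out-degrees are at most one, there
are no directed cycles, every initial vertex (in-degree 0) of a path lies in `I` and every
final vertex (out-degree 0) lies in `O`.  (A trivial path is a vertex of `S` with no arcs.) -/
structure DisjointIOPaths (G : SimpleGraph V) (I O : Set V) where
  S : Set V
  A : V → V → Prop
  mem_left : ∀ x y, A x y → x ∈ S
  mem_right : ∀ x y, A x y → y ∈ S
  adj : ∀ x y, A x y → G.Adj x y
  out_unique : ∀ x y y', A x y → A x y' → y = y'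
  in_unique : ∀ x x' y, A x y → A x' y → x = x'
  acyclic : ∀ x, ¬ Relation.TransGen A x x
  source_mem : ∀ v ∈ S, (¬ ∃ u, A u v) → v ∈ I
  sink_mem : ∀ v ∈ S, (¬ ∃ w, A v w) → v ∈ O

/-- Let `(G, I, O)` be a geometry with `|I| = |O|` having a causal path
cover `𝒞`.  Then `𝒞` is the unique maximum-size collection of vertex-disjoint directed
`I`–`O` paths in `G`: any collection `ℱ` of vertex-disjoint `I`–`O` paths with `|ℱ| = |I|`
paths equals `𝒞` (it covers all of `V(G)` and has exactly the arcs of `𝒞`). -/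
theorem causal_path_cover_unique [Fintype V] (G : SimpleGraph V) (I O : Set V)
    (h : I.ncard = O.ncard) (C : PathCover G I O) (hC : ¬ C.Vicious)
    (F : DisjointIOPaths G I O)
    (hmax : {v | v ∈ F.S ∧ ¬ ∃ u, F.A u v}.ncard = I.ncard) :
    F.S = Set.univ ∧ ∀ x y, F.A x y ↔ C.Arc x y := by
  classical
  -- In/Out vertex sets of F
  set In : Set V := {v | ∃ u, F.A u v} with hIn_def
  set Out : Set V := {v | ∃ w, F.A v w} with hOut_def
  have hInS : In ⊆ F.S := fun v ⟨u, hu⟩ => F.mem_right u v hu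
  have hOutS : Out ⊆ F.S := fun v ⟨w, hw⟩ => F.mem_left v w hw
  -- successor map of F
  have hg : ∀ v ∈ Out, ∃ w, F.A v w := fun v hv => hv
  set g : V → V := fun v => if h : ∃ w, F.A v w then h.choose else v with hg_def
  have hgA : ∀ v ∈ Out, F.A v (g v) := by
    intro v hv
    have hv' : ∃ w, F.A v w := hv
    show F.A v (if h : ∃ w, F.A v w then h.choose else v)
    rw [dif_pos hv']
    exact hv'.choose_spec
  have hbij : Set.BijOn g Out In := by
    refine ⟨fun v hv => ⟨v, hgA v hv⟩, ?_, ?_⟩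
    · intro u hu v hv he
      exact F.in_unique u v (g u) (hgA u hu) (he ▸ hgA v hv)
    · rintro v ⟨u, hu⟩
      have huO : u ∈ Out := ⟨v, hu⟩
      exact ⟨u, huO, F.out_unique u (g u) v (hgA u huO) hu⟩
  have hcard : In.ncard = Out.ncard := by
    rw [← hbij.image_eq]
    exact Set.ncard_image_of_injOn hbij.injOn
  -- sources and sinks
  have hsrc : {v | v ∈ F.S ∧ ¬ ∃ u, F.A u v} = F.S \ In := rfl
  have hsnk_card : (F.S \ Out).ncard = O.ncard := by
    rw [Set.ncard_diff hOutS, ← hcard, ← Set.ncard_diff hInS, ← hsrc, hmax, h]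
  have hsink_sub : F.S \ Out ⊆ O := by
    rintro v ⟨hvS, hvO⟩
    exact F.sink_mem v hvS hvO
  have hsink : F.S \ Out = O :=
    Set.eq_of_subset_of_ncard_le hsink_sub (le_of_eq hsnk_card.symm)
  have hO_S : ∀ o ∈ O, o ∈ F.S := fun o ho => (hsink.symm.subset ho).1
  have hO_noOut : ∀ o ∈ O, o ∉ Out := fun o ho => (hsink.symm.subset ho).2
  -- the strict order ≺ := TransGen C.Seg
  set R : V → V → Prop := fun a b => Relation.TransGen C.Seg b a with hR_def
  haveI hirr : IsIrrefl V R :=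
    ⟨fun a ha => hC (show ∃ x, Relation.TransGen C.Seg x x from ⟨a, ha⟩)⟩
  haveI htr : IsTrans V R := ⟨fun a b c hab hbc => hbc.trans hab⟩
  have hwf : WellFounded R := Finite.wellFounded_of_trans_of_irrefl R
  -- key ordering lemma
  have ord : ∀ x, x ∉ O → ∀ p, G.Adj p (C.succ x) → p ≠ x →
      Relation.TransGen C.Seg x p := by
    intro x hx p hadj hpx
    by_cases h1 : C.Arc p (C.succ x)
    · exact absurd (C.inj p h1.1 x hx h1.2.symm) hpx
    · by_cases h2 : C.Arc (C.succ x) p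
      · have s1 : C.Seg x (C.succ x) := Or.inl ⟨hx, rfl⟩
        have s2 : C.Seg (C.succ x) p := Or.inl h2
        exact (Relation.TransGen.single s1).tail s2
      · exact Relation.TransGen.single (Or.inr ⟨C.succ x, ⟨hx, rfl⟩, hadj, h1, h2⟩)
  -- main induction
  have Q : ∀ x, x ∈ F.S ∧ (x ∉ O → F.A x (C.succ x)) := by
    intro x
    induction x using hwf.induction with
    | _ x IH =>
      by_cases hx : x ∈ O
      · exact ⟨hO_S x hx, fun h => absurd hx h⟩
      · -- y := succ x
        set y := C.succ x with hy
        have hxy : Relation.TransGen C.Seg x y := Relation.TransGen.single (Or.inl ⟨hx, rfl⟩)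
        have hyS : y ∈ F.S := (IH y hxy).1
        have hyI : y ∉ I := C.succ_notMem x hx
        have hpred : ∃ p, F.A p y := by
          by_contra hno
          exact hyI (F.source_mem y hyS hno)
        obtain ⟨p, hp⟩ := hpred
        have hpOut : p ∈ Out := ⟨y, hp⟩
        have hpO : p ∉ O := fun hpo => hO_noOut p hpo hpOut
        have hpadj : G.Adj p y := F.adj p y hp
        have hpx : p = x := by
          by_contra hne
          have hxp : Relation.TransGen C.Seg x p := ord x hx p hpadj hne
          have hpA : F.A p (C.succ p) := (IH p hxp).2 hpO
          have hyp : y = C.succ p := F.out_unique p y (C.succ p) hp hpA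
          exact hne (C.inj p hpO x hx (hyp.symm.trans hy))
        subst hpx
        exact ⟨F.mem_left p y hp, fun _ => hp⟩
  refine ⟨Set.eq_univ_of_forall fun x => (Q x).1, fun x y => ⟨?_, ?_⟩⟩
  · intro hxy
    have hxO : x ∉ O := fun hxo => hO_noOut x hxo ⟨y, hxy⟩
    exact ⟨hxO, F.out_unique x y (C.succ x) hxy ((Q x).2 hxO)⟩
  · rintro ⟨hxO, rfl⟩
    exact (Q x).2 hxO

end OneWayFlow
end

section
/- Let (G, I, O) be a geometry with |I| = |O|. Then there is at most one function f : O^c → I^c such that (f, ≼) is a flow on (G, I, O) for some partial order ≼. -/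
namespace OneWayFlow

variable {V : Type}

/-- Let `(G, I, O)` be a geometry with `|I| = |O|`.  Then there is at most
one function `f : Oᶜ → Iᶜ` such that `(f, ≼)` is a flow on `(G, I, O)` for some partial
order `≼`. -/
theorem flow_function_unique [Fintype V] (G : SimpleGraph V) (I O : Set V)
    (h : I.ncard = O.ncard) (F₁ F₂ : Flow G I O) :
    ∀ x, x ∉ O → F₁.f x = F₂.f x := by
  classical
  -- injectivity of any flow function on Oᶜ
  have inj : ∀ (F : Flow G I O), ∀ x, x ∉ O → ∀ y, y ∉ O → F.f x = F.f y → x = y := by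
    intro F x hx y hy hxy
    have h1 : F.le y x := F.le_nbr y hy x (hxy ▸ F.adj x hx)
    have h2 : F.le x y := F.le_nbr x hx y (hxy.symm ▸ F.adj y hy)
    exact F.le_antisymm x y h2 h1
  -- F₂.f maps Oᶜ onto Iᶜ (surjectivity from the cardinality hypothesis)
  have himg : F₂.f '' Oᶜ = Iᶜ := by
    have hsub : F₂.f '' Oᶜ ⊆ Iᶜ := by
      rintro _ ⟨x, hx, rfl⟩
      exact F₂.f_notMem x hx
    have hcard : (F₂.f '' Oᶜ).ncard = Oᶜ.ncard := by
      apply Set.ncard_image_of_injOn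
      intro x hx y hy hxy
      exact inj F₂ x hx y hy hxy
    have hOc : Oᶜ.ncard = Iᶜ.ncard := by
      have h1 := Set.ncard_add_ncard_compl O
      have h2 := Set.ncard_add_ncard_compl I
      omega
    exact Set.eq_of_subset_of_ncard_le hsub (by rw [hcard, hOc]) (Set.toFinite _)
  have surj : ∀ y, y ∉ I → ∃ x, x ∉ O ∧ F₂.f x = y := by
    intro y hy
    have : y ∈ F₂.f '' Oᶜ := himg ▸ hy
    obtain ⟨x, hx, hfx⟩ := this
    exact ⟨x, hx, hfx⟩
  -- suppose the functions disagree somewhere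
  by_contra hne
  push_neg at hne
  obtain ⟨x₀, hx₀O, hx₀ne⟩ := hne
  -- the set of disagreement points
  set S : Type := {x : V // x ∉ O ∧ F₁.f x ≠ F₂.f x} with hS
  -- step: from a disagreement point, produce a ≤₁-larger distinct disagreement point
  have step : ∀ s : S, ∃ t : S, F₁.le s.1 t.1 ∧ s.1 ≠ t.1 := by
    rintro ⟨x, hxO, hxne⟩
    obtain ⟨y, hyO, hfy⟩ := surj (F₁.f x) (F₁.f_notMem x hxO)
    have hxy : x ≠ y := by
      rintro rfl
      exact hxne hfy.symm
    have hyne : F₁.f y ≠ F₂.f y := by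
      intro hcontra
      have : F₁.f y = F₁.f x := hcontra.trans hfy
      exact hxy (inj F₁ x hxO y hyO this.symm)
    -- x ≤₁ y : y is adjacent to F₂.f y = F₁.f x
    have hadj : G.Adj y (F₁.f x) := hfy ▸ F₂.adj y hyO
    have hle : F₁.le x y := F₁.le_nbr x hxO y hadj
    exact ⟨⟨y, hyO, hyne⟩, hle, hxy⟩
  choose next hnext_le hnext_ne using step
  -- iterate
  let seq : ℕ → S := fun n => next^[n] ⟨x₀, hx₀O, hx₀ne⟩
  have hseq_succ : ∀ n, seq (n + 1) = next (seq n) := fun n =>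
    Function.iterate_succ_apply' next n _
  -- chain
  have chain : ∀ m n, m < n → F₁.le (seq m).1 (seq n).1 := by
    intro m n hmn
    induction n with
    | zero => omega
    | succ k ih =>
      rcases Nat.lt_succ_iff_lt_or_eq.mp hmn with hlt | rfl
      · exact F₁.le_trans _ _ _ (ih hlt) (hseq_succ k ▸ hnext_le (seq k))
      · exact hseq_succ m ▸ hnext_le (seq m)
  have strict : ∀ m n, m < n → (seq m).1 ≠ (seq n).1 := by
    intro m n hmn heq
    have h1 : F₁.le (seq m).1 (seq (m + 1)).1 := hseq_succ m ▸ hnext_le (seq m)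
    have h2 : F₁.le (seq (m + 1)).1 (seq m).1 := by
      rcases Nat.lt_or_ge (m + 1) n with hlt | hge
      · exact heq ▸ chain (m + 1) n hlt
      · have : n = m + 1 := by omega
        subst this
        exact heq ▸ F₁.le_refl _
    have := F₁.le_antisymm _ _ h1 h2
    exact (hseq_succ m ▸ hnext_ne (seq m)) this
  -- infinitely many distinct elements in a finite type: contradiction
  have hinj : Function.Injective (fun n => (seq n).1) := by
    intro m n hmn
    by_contra hne'
    rcases Nat.lt_or_ge m n with hlt | hge
    · exact strict m n hlt hmn
    · exact strict n m (by omega) hmn.symm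
  obtain ⟨m, n, hmn, heq⟩ := Finite.exists_ne_map_eq_of_infinite (fun n => (seq n).1)
  exact hmn (hinj heq)

end OneWayFlow
end

section
/- Let W = u₀ u₁ ⋯ u_ℓ be a nontrivial influencing walk for a family of paths ℱ in a geometry (G, I, O). Then the decomposition of W into segments is unique. -/
namespace OneWayFlow

variable {V : Type}

/-- A family of vertex-disjoint directed paths in `G`, encoded by its set of arcs: arcs lie
along edges of `G`, in- and out-degrees are at most one, and there are no directed cycles. -/
structure PathFamily (G : SimpleGraph V) where
  A : V → V → Prop
  adj : ∀ x y, A x y → G.Adj x y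
  out_unique : ∀ x y y', A x y → A x y' → y = y'
  in_unique : ∀ x x' y, A x y → A x' y → x = x'
  acyclic : ∀ x, ¬ Relation.TransGen A x x

/-- A segment, as a list of vertices, for an arc relation `A` of a family of directed paths
in `G`: either `[x, y]` with `x → y` an arc, or `[x, z, y]` where `x → z` is an arc and
`y·z ∈ E(G)` is an edge not covered by the family. -/
def IsSegList (G : SimpleGraph V) (A : V → V → Prop) (l : List V) : Prop :=
  (∃ x y, l = [x, y] ∧ A x y) ∨
  (∃ x z y, l = [x, z, y] ∧ A x z ∧ G.Adj y z ∧ ¬ A y z ∧ ¬ A z y)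

/-- Glue a list of segments into a single walk (consecutive segments share an endpoint,
so each later segment contributes its tail). -/
def joinSegs : List (List V) → List V
  | [] => []
  | s :: r => s ++ r.flatMap List.tail

/-- `D` is a decomposition of the walk `W` into segments (for the arc relation `A`):
every member of `D` is a segment, consecutive segments are glued end-to-start, and the
concatenation of the segments is `W`. -/
def IsDecomp (G : SimpleGraph V) (A : V → V → Prop) (W : List V) (D : List (List V)) : Prop :=
  (∀ s ∈ D, IsSegList G A s) ∧ D.Chain' (fun s t => s.getLast? = t.head?) ∧ joinSegs D = W

lemma seg_tail_ne {G : SimpleGraph V} {A : V → V → Prop} {s : List V}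
    (h : IsSegList G A s) : s.tail ≠ [] := by
  rcases h with ⟨x, y, rfl, _⟩ | ⟨x, z, y, rfl, _⟩ <;> simp

lemma tail_decomp {G : SimpleGraph V} {A : V → V → Prop} {s t : List V} {r : List (List V)}
    {y : V} (hlast : s.getLast? = some y)
    (hseg : ∀ u ∈ s :: t :: r, IsSegList G A u)
    (hch : (s :: t :: r).Chain' (fun a b => a.getLast? = b.head?)) :
    IsDecomp G A (y :: (t :: r).flatMap List.tail) (t :: r) := by
  have hht : t.head? = some y := by
    have h := (List.isChain_cons_cons.mp hch).1; rw [hlast] at h; exact h.symm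
  obtain ⟨t', rfl⟩ : ∃ t', t = y :: t' := by
    cases t with
    | nil => simp at hht
    | cons a t' => simp at hht; exact ⟨t', by rw [hht]⟩
  refine ⟨fun u hu => hseg u (List.mem_cons_of_mem _ hu), (List.isChain_cons_cons.mp hch).2, ?_⟩
  simp [joinSegs]

lemma first_arc {G : SimpleGraph V} {A : V → V → Prop} {x y : V} {rest : List V}
    {D : List (List V)} (hD : IsDecomp G A (x :: y :: rest) D) : A x y := by
  obtain ⟨hseg, -, hjoin⟩ := hD
  cases D with
  | nil => simp [joinSegs] at hjoin
  | cons t r =>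
    rcases hseg t (List.mem_cons_self ..) with ⟨a, b, rfl, hab⟩ | ⟨a, b, c, rfl, hab, -⟩ <;>
      simp [joinSegs] at hjoin
    · obtain ⟨rfl, rfl, -⟩ := hjoin; exact hab
    · obtain ⟨rfl, rfl, -⟩ := hjoin; exact hab

lemma decomp_unique_aux {G : SimpleGraph V} {A : V → V → Prop} :
    ∀ (D₁ : List (List V)) (W : List V) (D₂ : List (List V)), 2 ≤ W.length →
      IsDecomp G A W D₁ → IsDecomp G A W D₂ → D₁ = D₂ := by
  intro D₁
  induction D₁ with
  | nil =>
    intro W D₂ hW h₁ _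
    obtain ⟨-, -, hj⟩ := h₁
    simp only [joinSegs] at hj
    rw [← hj] at hW; simp at hW
  | cons s₁ r₁ ih =>
    intro W D₂ hW h₁ h₂
    cases D₂ with
    | nil =>
      obtain ⟨-, -, hj⟩ := h₂
      simp only [joinSegs] at hj
      rw [← hj] at hW; simp at hW
    | cons s₂ r₂ =>
      obtain ⟨hseg₁, hch₁, hj₁⟩ := h₁
      obtain ⟨hseg₂, hch₂, hj₂⟩ := h₂
      have hE := hj₁.trans hj₂.symm
      rcases hseg₁ s₁ (List.mem_cons_self ..) with ⟨x, y, rfl, hA₁⟩ |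
          ⟨x, z, y, rfl, hA₁, hadj₁, hn₁, hn₁'⟩ <;>
        rcases hseg₂ s₂ (List.mem_cons_self ..) with ⟨x', y', rfl, hA₂⟩ |
          ⟨x', z', y', rfl, hA₂, hadj₂, hn₂, hn₂'⟩ <;>
        simp only [joinSegs, List.cons_append, List.nil_append, List.cons.injEq] at hE
      · -- both segments of length 2
        obtain ⟨rfl, rfl, hT⟩ := hE
        cases r₁ with
        | nil =>
          cases r₂ with
          | nil => rfl
          | cons t r =>
            exfalso
            simp only [List.flatMap_nil, List.flatMap_cons] at hT
            exact seg_tail_ne (hseg₂ t (by simp)) (List.append_eq_nil_iff.mp hT.symm).1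
        | cons t r =>
          cases r₂ with
          | nil =>
            exfalso
            simp only [List.flatMap_nil, List.flatMap_cons] at hT
            exact seg_tail_ne (hseg₁ t (by simp)) (List.append_eq_nil_iff.mp hT).1
          | cons t' r' =>
            have hd₁ := tail_decomp (s := [x, y]) (y := y) (by simp) hseg₁ hch₁
            have hd₂ := tail_decomp (s := [x, y]) (y := y) (by simp) hseg₂ hch₂
            rw [hT] at hd₁
            have hlen : 2 ≤ (y :: (t' :: r').flatMap List.tail).length := by
              have : t'.tail ≠ [] := seg_tail_ne (hseg₂ t' (by simp))
              cases ht' : t'.tail with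
              | nil => exact absurd ht' this
              | cons a l => simp [List.flatMap_cons, ht']
            rw [ih _ _ hlen hd₁ hd₂]
      · -- s₁ has length 2, s₂ has length 3
        exfalso
        obtain ⟨rfl, rfl, hT⟩ := hE
        cases r₁ with
        | nil => simp at hT
        | cons t r =>
          have hd₁ := tail_decomp (s := [x, y]) (y := y) (by simp) hseg₁ hch₁
          rw [hT] at hd₁
          exact hn₂' (first_arc hd₁)
      · -- s₁ has length 3, s₂ has length 2
        exfalso
        obtain ⟨rfl, rfl, hT⟩ := hE
        cases r₂ with
        | nil => simp at hT
        | cons t r =>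
          have hd₂ := tail_decomp (s := [x, z]) (y := z) (by simp) hseg₂ hch₂
          rw [← hT] at hd₂
          exact hn₁' (first_arc hd₂)
      · -- both segments of length 3
        obtain ⟨rfl, rfl, rfl, hT⟩ := hE
        cases r₁ with
        | nil =>
          cases r₂ with
          | nil => rfl
          | cons t r =>
            exfalso
            simp only [List.flatMap_nil, List.flatMap_cons] at hT
            exact seg_tail_ne (hseg₂ t (by simp)) (List.append_eq_nil_iff.mp hT.symm).1
        | cons t r =>
          cases r₂ with
          | nil =>
            exfalso
            simp only [List.flatMap_nil, List.flatMap_cons] at hT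
            exact seg_tail_ne (hseg₁ t (by simp)) (List.append_eq_nil_iff.mp hT).1
          | cons t' r' =>
            have hd₁ := tail_decomp (s := [x, z, y]) (y := y) (by simp) hseg₁ hch₁
            have hd₂ := tail_decomp (s := [x, z, y]) (y := y) (by simp) hseg₂ hch₂
            rw [hT] at hd₁
            have hlen : 2 ≤ (y :: (t' :: r').flatMap List.tail).length := by
              have : t'.tail ≠ [] := seg_tail_ne (hseg₂ t' (by simp))
              cases ht' : t'.tail with
              | nil => exact absurd ht' this
              | cons a l => simp [List.flatMap_cons, ht']
            rw [ih _ _ hlen hd₁ hd₂]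

/-- Let `W = u₀ u₁ ⋯ u_ℓ` be a nontrivial influencing walk for a family
`ℱ` of directed paths in a geometry `(G, I, O)`.  Then the decomposition of `W` into
segments is unique. -/
theorem decomposition_unique [Fintype V] (G : SimpleGraph V) (I O : Set V)
    (F : PathFamily G) (W : List V) (hW : 2 ≤ W.length)
    (D₁ D₂ : List (List V))
    (h₁ : IsDecomp G F.A W D₁) (h₂ : IsDecomp G F.A W D₂) :
    D₁ = D₂ := by
  exact decomp_unique_aux D₁ W D₂ hW h₁ h₂

end OneWayFlow
end

section
/- Let 𝒞 be a path cover of a geometry (G, I, O) with |I| = |O|, and suppose ℱ is a maximum-size collection of vertex-disjoint I–O paths with ℱ ≠ 𝒞. Then 𝒞 has a vicious circuit. -/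
namespace OneWayFlow

variable {V : Type}

section Aux

private lemma exists_cycle_of_step {α : Type} [Finite α] {r : α → α → Prop} {P : α → Prop}
    (hne : ∃ x, P x) (hstep : ∀ x, P x → ∃ y, P y ∧ r x y) :
    ∃ z, Relation.TransGen r z z := by
  by_contra hc
  push_neg at hc
  obtain ⟨x0, hx0⟩ := hne
  let s : {x // P x} → {x // P x} → Prop := fun a b => Relation.TransGen r b.1 a.1
  haveI : IsTrans _ s := ⟨fun a b c hab hbc => Relation.TransGen.trans hbc hab⟩
  haveI : IsIrrefl _ s := ⟨fun a => hc a.1⟩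
  have wf := Finite.wellFounded_of_trans_of_irrefl s
  obtain ⟨m, -, hmin⟩ := wf.has_min Set.univ ⟨⟨x0, hx0⟩, trivial⟩
  obtain ⟨y, hy, hry⟩ := hstep m.1 m.2
  exact hmin ⟨y, hy⟩ trivial (Relation.TransGen.single hry)

private lemma back_confluent {G : SimpleGraph V} {I O : Set V} (F : DisjointIOPaths G I O)
    {a t : V} (hat : Relation.ReflTransGen F.A a t) :
    ∀ b, Relation.ReflTransGen F.A b t →
      Relation.ReflTransGen F.A a b ∨ Relation.ReflTransGen F.A b a := by
  induction hat with
  | refl => intro b hb; right; exact hb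
  | @tail u t hau hut ih =>
    intro b hbt
    rcases Relation.ReflTransGen.cases_tail hbt with rfl | ⟨u', hbu', hu't⟩
    · left; exact hau.tail hut
    · have : u' = u := F.in_unique u' u t hu't hut
      subst this
      exact ih b hbu'

private lemma source_eq {G : SimpleGraph V} {I O : Set V} (F : DisjointIOPaths G I O)
    {s s' t : V} (hs : ¬ ∃ u, F.A u s) (hs' : ¬ ∃ u, F.A u s')
    (h1 : Relation.ReflTransGen F.A s t) (h2 : Relation.ReflTransGen F.A s' t) : s = s' := by
  rcases back_confluent F h1 s' h2 with hr | hr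
  · rcases Relation.ReflTransGen.cases_tail hr with h | ⟨c, -, hc⟩
    · exact h.symm
    · exact absurd ⟨c, hc⟩ hs'
  · rcases Relation.ReflTransGen.cases_tail hr with h | ⟨c, -, hc⟩
    · exact h
    · exact absurd ⟨c, hc⟩ hs

private lemma exists_terminal_aux [Fintype V] {G : SimpleGraph V} {I O : Set V}
    (F : DisjointIOPaths G I O) :
    ∀ n (v : V), {x | Relation.TransGen F.A v x}.ncard ≤ n →
      ∃ t, Relation.ReflTransGen F.A v t ∧ ¬ ∃ w, F.A t w := by
  intro n
  induction n with
  | zero =>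
    intro v hv
    by_cases hout : ∃ w, F.A v w
    · obtain ⟨w, hw⟩ := hout
      have hmem : w ∈ {x | Relation.TransGen F.A v x} := Relation.TransGen.single hw
      have : 0 < {x | Relation.TransGen F.A v x}.ncard :=
        (Set.ncard_pos (Set.toFinite _)).2 ⟨w, hmem⟩
      omega
    · exact ⟨v, Relation.ReflTransGen.refl, hout⟩
  | succ n ih =>
    intro v hv
    by_cases hout : ∃ w, F.A v w
    · obtain ⟨w, hw⟩ := hout
      have hsub : {x | Relation.TransGen F.A w x} ⊆ {x | Relation.TransGen F.A v x} :=
        fun x hx => (Relation.TransGen.single hw).trans hx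
      have hmem : w ∈ {x | Relation.TransGen F.A v x} := Relation.TransGen.single hw
      have hnot : w ∉ {x | Relation.TransGen F.A w x} := F.acyclic w
      have hss : {x | Relation.TransGen F.A w x} ⊂ {x | Relation.TransGen F.A v x} :=
        ⟨hsub, fun hsup => hnot (hsup hmem)⟩
      have hlt := Set.ncard_lt_ncard hss (Set.toFinite _)
      obtain ⟨t, ht1, ht2⟩ := ih w (by omega)
      exact ⟨t, Relation.ReflTransGen.head hw ht1, ht2⟩
    · exact ⟨v, Relation.ReflTransGen.refl, hout⟩

private lemma exists_terminal [Fintype V] {G : SimpleGraph V} {I O : Set V}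
    (F : DisjointIOPaths G I O) (v : V) :
    ∃ t, Relation.ReflTransGen F.A v t ∧ ¬ ∃ w, F.A t w :=
  exists_terminal_aux F _ v le_rfl

private lemma reach_mem {G : SimpleGraph V} {I O : Set V} (F : DisjointIOPaths G I O)
    {v t : V} (h : Relation.ReflTransGen F.A v t) (hv : v ∈ F.S) : t ∈ F.S := by
  rcases Relation.ReflTransGen.cases_tail h with rfl | ⟨c, -, hc⟩
  · exact hv
  · exact F.mem_right c t hc

end Aux


/-- Let `𝒞` be a path cover of a geometry `(G, I, O)` with `|I| = |O|`,
and suppose `ℱ` is a maximum-size collection of vertex-disjoint `I`–`O` paths (so `|ℱ| = |I|`)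
which differs from `𝒞`.  Then `𝒞` has a vicious circuit. -/
theorem differing_max_family_gives_vicious [Fintype V] (G : SimpleGraph V) (I O : Set V)
    (h : I.ncard = O.ncard) (C : PathCover G I O)
    (F : DisjointIOPaths G I O)
    (hmax : {v | v ∈ F.S ∧ ¬ ∃ u, F.A u v}.ncard = I.ncard)
    (hne : ¬ (F.S = Set.univ ∧ ∀ x y, F.A x y ↔ C.Arc x y)) :
    C.Vicious := by
  classical
  -- terminal map
  set src := {v | v ∈ F.S ∧ ¬ ∃ u, F.A u v} with hsrc
  set snk := {v | v ∈ F.S ∧ ¬ ∃ w, F.A v w} with hsnk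
  let φ : V → V := fun v => Classical.choose (exists_terminal F v)
  have hφ : ∀ v, Relation.ReflTransGen F.A v (φ v) ∧ ¬ ∃ w, F.A (φ v) w :=
    fun v => Classical.choose_spec (exists_terminal F v)
  have hmapsto : ∀ v ∈ src, φ v ∈ snk :=
    fun v hv => ⟨reach_mem F (hφ v).1 hv.1, (hφ v).2⟩
  have hinj : Set.InjOn φ src := by
    intro a ha b hb hab
    exact source_eq F ha.2 hb.2 (hφ a).1 (hab ▸ (hφ b).1)
  have hcard : src.ncard ≤ snk.ncard :=
    Set.ncard_le_ncard_of_injOn φ hmapsto hinj (Set.toFinite _)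
  have hsnkO : snk ⊆ O := fun v hv => F.sink_mem v hv.1 hv.2
  have hsnk_eq : snk = O :=
    Set.eq_of_subset_of_ncard_le hsnkO (by rw [← h, ← hmax]; exact hcard) (Set.toFinite _)
  have hO : ∀ v ∈ O, v ∈ F.S ∧ ¬ ∃ w, F.A v w := by
    intro v hv
    rw [← hsnk_eq] at hv
    exact hv
  -- nonemptiness of the invariant
  have hPne : ∃ x, x ∉ O ∧ ¬ F.A x (C.succ x) := by
    by_contra hc
    push_neg at hc
    apply hne
    constructor
    · ext v
      simp only [Set.mem_univ, iff_true]
      by_cases hv : v ∈ O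
      · exact (hO v hv).1
      · exact F.mem_left _ _ (hc v hv)
    · intro x y
      constructor
      · intro hxy
        have hxO : x ∉ O := fun hx => (hO x hx).2 ⟨y, hxy⟩
        have := F.out_unique x y (C.succ x) hxy (hc x hxO)
        exact ⟨hxO, this⟩
      · rintro ⟨hxO, rfl⟩
        exact hc x hxO
  -- closure
  have hstep : ∀ x, (x ∉ O ∧ ¬ F.A x (C.succ x)) →
      ∃ y, (y ∉ O ∧ ¬ F.A y (C.succ y)) ∧ C.Seg x y := by
    rintro x ⟨hxO, hxF⟩
    set s := C.succ x with hs
    have hArcxs : C.Arc x s := ⟨hxO, rfl⟩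
    have hsI : s ∉ I := C.succ_notMem x hxO
    by_cases hsO : s ∈ O
    · -- s ∈ O : it has an F-in-arc from some u ≠ x
      have hsS : s ∈ F.S := (hO s hsO).1
      have hin : ∃ u, F.A u s := by
        by_contra hnin
        exact hsI (F.source_mem s hsS hnin)
      obtain ⟨u, hu⟩ := hin
      have huO : u ∉ O := fun huO' => (hO u huO').2 ⟨s, hu⟩
      have hux : u ≠ x := by rintro rfl; exact hxF hu
      refine ⟨u, ⟨huO, ?_⟩, Or.inr ⟨s, hArcxs, F.adj u s hu, ?_, ?_⟩⟩
      · intro hh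
        have : C.succ u = s := F.out_unique u (C.succ u) s hh hu
        exact hux (C.inj u huO x hxO (this.trans hs))
      · rintro ⟨huO', hsu⟩
        exact hux (C.inj u huO' x hxO (hsu.symm.trans hs))
      · rintro ⟨hsO', -⟩
        exact hsO' hsO
    · by_cases hinS : ∃ u, F.A u s
      · obtain ⟨u, hu⟩ := hinS
        have huO : u ∉ O := fun huO' => (hO u huO').2 ⟨s, hu⟩
        have hux : u ≠ x := by rintro rfl; exact hxF hu
        by_cases hus : u = C.succ s
        · -- edge s·u is covered in reverse; instead step x → s
          refine ⟨s, ⟨hsO, ?_⟩, Or.inl hArcxs⟩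
          intro hss
          rw [← hus] at hss
          exact F.acyclic s ((Relation.TransGen.single hss).tail hu)
        · -- jump x → s → u
          refine ⟨u, ⟨huO, ?_⟩, Or.inr ⟨s, hArcxs, F.adj u s hu, ?_, ?_⟩⟩
          · intro hh
            have : C.succ u = s := F.out_unique u (C.succ u) s hh hu
            exact hux (C.inj u huO x hxO (this.trans hs))
          · rintro ⟨huO', hsu⟩
            exact hux (C.inj u huO' x hxO (hsu.symm.trans hs))
          · rintro ⟨-, hh⟩
            exact hus hh
      · -- s is uncovered by F
        have hsnS : s ∉ F.S := fun hsS' => hsI (F.source_mem s hsS' hinS)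
        exact ⟨s, ⟨hsO, fun hh => hsnS (F.mem_left _ _ hh)⟩, Or.inl hArcxs⟩
  exact exists_cycle_of_step (P := fun x => x ∉ O ∧ ¬ F.A x (C.succ x)) hPne hstep

end OneWayFlow
end

section
/- Define the digraph 𝒯 on V(G) with an arc x → y iff there is an influencing walk for a path cover 𝒞 of (G, I, O) with exactly one segment from x to y. Then 𝒞 has a vicious circuit if and only if 𝒯 contains a directed cycle (equivalently, two distinct mutually reachable vertices). -/
namespace OneWayFlow

variable {V : Type}

/-- `C` has a vicious circuit in the walk sense: a closed walk (same first and last vertex)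
decomposing into at least one segment. -/
def PathCover.ViciousList {G : SimpleGraph V} {I O : Set V} (C : PathCover G I O) : Prop :=
  ∃ (W : List V) (D : List (List V)), D ≠ [] ∧ IsDecomp G C.Arc W D ∧ W.head? = W.getLast?

/-! Gluing segment lists end-to-start corresponds to composing one-segment steps, so a closed
walk decomposed into segments is the same as a closed walk in `𝒯`. Such a closed walk yields
two distinct mutually reachable vertices because `𝒯` has no loops: an arc `x → f(x)` is not a
loop since `C` is acyclic, and a two-edge segment `x → f(x) → x` would need the arc
`x → f(x)` of `C` to be uncovered. -/

theorem _root_.Relation.exists_transGen_self_iff_exists_ne {α : Type*} {r : α → α → Prop}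
    (hr : ∀ x, ¬ r x x) :
    (∃ x, Relation.TransGen r x x) ↔
      ∃ x y, x ≠ y ∧ Relation.ReflTransGen r x y ∧ Relation.ReflTransGen r y x := by
  constructor
  · rintro ⟨x, hxx⟩
    obtain ⟨y, hxy, hyx⟩ := Relation.TransGen.head'_iff.mp hxx
    exact ⟨x, y, fun h => hr x (h ▸ hxy), .single hxy, hyx⟩
  · rintro ⟨x, y, hne, hxy, hyx⟩
    obtain rfl | ⟨z, hxz, hzy⟩ := hxy.cases_head
    · exact absurd rfl hne
    · exact ⟨x, .head' hxz (hzy.trans hyx)⟩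

theorem _root_.List.getLast?_append_tail {α : Type*} {s l : List α} (h : s.getLast? = l.head?) :
    (s ++ l.tail).getLast? = l.getLast? := by
  rcases l with _ | ⟨a, _ | ⟨b, l⟩⟩
  · simpa using h
  · simpa using h
  · simp [List.getLast?_append, List.getLast?_cons]

section Decomposition

variable {G : SimpleGraph V} {A : V → V → Prop}

theorem IsSegList.ne_nil {s : List V} (h : IsSegList G A s) : s ≠ [] := by
  rcases h with ⟨x, y, rfl, -⟩ | ⟨x, z, y, rfl, -⟩ <;> simp

theorem head?_joinSegs_cons {t : List V} (r : List (List V)) (ht : t ≠ []) :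
    (joinSegs (t :: r)).head? = t.head? :=
  List.head?_append_of_ne_nil _ ht

theorem joinSegs_cons_cons {s t : List V} (r : List (List V)) (ht : t ≠ []) :
    joinSegs (s :: t :: r) = s ++ (joinSegs (t :: r)).tail := by
  simp [joinSegs, List.tail_append_of_ne_nil ht]

theorem isDecomp_singleton_iff {W s : List V} :
    IsDecomp G A W [s] ↔ IsSegList G A s ∧ W = s := by
  constructor
  · rintro ⟨hseg, -, rfl⟩
    exact ⟨hseg s (List.mem_singleton_self s), by simp [joinSegs]⟩
  · rintro ⟨hs, rfl⟩
    exact ⟨by simpa using hs, List.isChain_singleton _, by simp [joinSegs]⟩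

theorem isDecomp_cons_cons_iff {W s t : List V} {r : List (List V)} :
    IsDecomp G A W (s :: t :: r) ↔
      IsSegList G A s ∧ ∃ W', IsDecomp G A W' (t :: r) ∧ s.getLast? = W'.head? ∧
        W = s ++ W'.tail := by
  constructor
  · rintro ⟨hseg, hchain, rfl⟩
    have ht : t ≠ [] := (hseg t (by simp)).ne_nil
    refine ⟨hseg s (by simp), joinSegs (t :: r),
      ⟨fun u hu => hseg u (List.mem_cons_of_mem _ hu), hchain.tail, rfl⟩, ?_,
      joinSegs_cons_cons r ht⟩
    rw [head?_joinSegs_cons r ht]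
    exact (List.isChain_cons_cons.mp hchain).1
  · rintro ⟨hs, _, ⟨hseg, hchain, rfl⟩, hglue, rfl⟩
    have ht : t ≠ [] := (hseg t (by simp)).ne_nil
    refine ⟨?_, List.isChain_cons_cons.mpr ⟨?_, hchain⟩, joinSegs_cons_cons r ht⟩
    · simpa [hs] using hseg
    · rwa [← head?_joinSegs_cons r ht]

end Decomposition

namespace PathCover

variable {G : SimpleGraph V} {I O : Set V} (C : PathCover G I O)

theorem exists_segList_of_seg {x y : V} (h : C.Seg x y) :
    ∃ s, IsSegList G C.Arc s ∧ s.head? = some x ∧ s.getLast? = some y := by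
  rcases h with h | ⟨w, h⟩
  · exact ⟨[x, y], .inl ⟨x, y, rfl, h⟩, rfl, rfl⟩
  · exact ⟨[x, w, y], .inr ⟨x, w, y, rfl, h⟩, rfl, rfl⟩

theorem exists_seg_of_segList {s : List V} (h : IsSegList G C.Arc s) :
    ∃ x y, s.head? = some x ∧ s.getLast? = some y ∧ C.Seg x y := by
  rcases h with ⟨x, y, rfl, h⟩ | ⟨x, w, y, rfl, h⟩
  · exact ⟨x, y, rfl, rfl, .inl h⟩
  · exact ⟨x, y, rfl, rfl, .inr ⟨w, h⟩⟩

theorem transGen_of_isDecomp : ∀ {W : List V} {D : List (List V)}, D ≠ [] →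
    IsDecomp G C.Arc W D →
    ∃ a b, W.head? = some a ∧ W.getLast? = some b ∧ Relation.TransGen C.Seg a b
  | _, [_], _, hD => by
    obtain ⟨hs, rfl⟩ := isDecomp_singleton_iff.mp hD
    obtain ⟨x, y, hx, hy, hxy⟩ := C.exists_seg_of_segList hs
    exact ⟨x, y, hx, hy, .single hxy⟩
  | _, _ :: _ :: _, _, hD => by
    obtain ⟨hs, W', hW', hglue, rfl⟩ := isDecomp_cons_cons_iff.mp hD
    obtain ⟨y, z, hy, hz, hyz⟩ := transGen_of_isDecomp (List.cons_ne_nil _ _) hW'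
    obtain ⟨x, y', hx, hy', hxy'⟩ := C.exists_seg_of_segList hs
    obtain rfl : y' = y := Option.some.inj (hy'.symm.trans (hglue.trans hy))
    refine ⟨x, z, ?_, ?_, .head hxy' hyz⟩
    · rwa [List.head?_append_of_ne_nil _ hs.ne_nil]
    · rwa [List.getLast?_append_tail hglue]

theorem exists_isDecomp_of_transGen {a b : V} (h : Relation.TransGen C.Seg a b) :
    ∃ W D, D ≠ [] ∧ IsDecomp G C.Arc W D ∧ W.head? = some a ∧ W.getLast? = some b := by
  induction h using Relation.TransGen.head_induction_on with
  | single hab =>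
    obtain ⟨s, hs, ha, hb⟩ := C.exists_segList_of_seg hab
    exact ⟨s, [s], List.cons_ne_nil _ _, isDecomp_singleton_iff.mpr ⟨hs, rfl⟩, ha, hb⟩
  | head hac _ ih =>
    obtain ⟨W, _ | ⟨t, r⟩, hD, hdec, hc, hb⟩ := ih
    · exact absurd rfl hD
    obtain ⟨s, hs, ha, hc'⟩ := C.exists_segList_of_seg hac
    have hglue : s.getLast? = W.head? := hc'.trans hc.symm
    refine ⟨s ++ W.tail, s :: t :: r, List.cons_ne_nil _ _,
      isDecomp_cons_cons_iff.mpr ⟨hs, W, hdec, hglue, rfl⟩, ?_, ?_⟩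
    · rwa [List.head?_append_of_ne_nil _ hs.ne_nil]
    · rwa [List.getLast?_append_tail hglue]

theorem viciousList_iff_vicious : C.ViciousList ↔ C.Vicious := by
  constructor
  · rintro ⟨W, D, hD, hdec, hclosed⟩
    obtain ⟨a, b, ha, hb, hab⟩ := C.transGen_of_isDecomp hD hdec
    obtain rfl : a = b := Option.some.inj (ha.symm.trans (hclosed.trans hb))
    exact ⟨a, hab⟩
  · rintro ⟨x, hx⟩
    obtain ⟨W, D, hD, hdec, ha, hb⟩ := C.exists_isDecomp_of_transGen hx
    exact ⟨W, D, hD, hdec, ha.trans hb.symm⟩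

end PathCover

theorem vicious_iff_digraph_cycle_general (G : SimpleGraph V) (I O : Set V)
    (C : PathCover G I O) :
    (C.ViciousList ↔ ∃ x, Relation.TransGen C.Seg x x) ∧
    (C.ViciousList ↔ ∃ x y, x ≠ y ∧
      Relation.ReflTransGen C.Seg x y ∧ Relation.ReflTransGen C.Seg y x) :=
  ⟨C.viciousList_iff_vicious,
    C.viciousList_iff_vicious.trans (Relation.exists_transGen_self_iff_exists_ne C.seg_irrefl)⟩

/-- Let `𝒯` be the digraph on `V(G)` with an arc `x → y` iff there is an
influencing walk for the path cover `𝒞` with exactly one segment from `x` to `y` (the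
relation `C.Seg`).  Then `𝒞` has a vicious circuit iff `𝒯` contains a directed cycle,
equivalently iff `𝒯` has two distinct mutually reachable vertices. -/
theorem vicious_iff_digraph_cycle [Fintype V] (G : SimpleGraph V) (I O : Set V)
    (C : PathCover G I O) :
    (C.ViciousList ↔ ∃ x, Relation.TransGen C.Seg x x) ∧
    (C.ViciousList ↔ ∃ x y, x ≠ y ∧
      Relation.ReflTransGen C.Seg x y ∧ Relation.ReflTransGen C.Seg y x) :=
  vicious_iff_digraph_cycle_general G I O C

end OneWayFlow
end
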